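/- In the semimartingale framework, suppose M^{2,s} ∩ L²₊(P) is nonempty and let M̃ = argmin{E[Y²] : Y ∈ M^{2,s}, Y ≥ 0 a.s.}. Then the optimal value of the monotone mean-variance problem satisfies sup{V_θ(X_T) : X_T ∈ x₀ + K₂} ≤ x₀ + E[M̃²]/(2θ) − 1/(2θ). -/

import Mathlib

open MeasureTheory ProbabilityTheory

lemma aux_int_mul {Ω : Type*} [MeasurableSpace Ω] {P : Measure Ω} {f g : Ω → ℝ}
    (hf : MemLp f 2 P) (hg : MemLp g 2 P) : Integrable (fun ω => f ω * g ω) P := by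
  have h := ((hf.add hg).integrable_sq.sub hf.integrable_sq).sub hg.integrable_sq
  have he : (fun ω => f ω * g ω) = fun ω => (((f ω + g ω)^2 - f ω^2) - g ω^2)/2 := by
    funext ω; ring
  rw [he]; exact h.div_const 2

/-- Upper bound on the monotone mean-variance value in the semimartingale framework:
if `M̃` minimizes `E[Y²]` over nonnegative signed martingale densities
`Y ∈ 𝓜^{2,s} ∩ L²₊`, then `sup {V_θ(X_T) : X_T ∈ x₀ + K₂} ≤ x₀ + E[M̃²]/(2θ) − 1/(2θ)`. -/
theorem stmt_18 {Ω : Type*} [MeasurableSpace Ω] (P : Measure Ω) [IsProbabilityMeasure P]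
    (K : Submodule ℝ (Lp ℝ 2 P)) (hK : IsClosed (K : Set (Lp ℝ 2 P)))
    (Ms : Set (Lp ℝ 2 P))
    (hMs : Ms = {g : Lp ℝ 2 P | (∫ ω, g ω ∂P = 1) ∧ ∀ f ∈ K, ∫ ω, g ω * f ω ∂P = 0})
    (Mt : Lp ℝ 2 P) (hMtMem : Mt ∈ Ms) (hMtnn : ∀ᵐ ω ∂P, 0 ≤ Mt ω)
    (hMtmin : ∀ g ∈ Ms, (∀ᵐ ω ∂P, 0 ≤ g ω) →
        ∫ ω, (Mt ω) ^ 2 ∂P ≤ ∫ ω, (g ω) ^ 2 ∂P)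
    (x₀ θ : ℝ) (hθ : 0 < θ) :
    sSup ((fun f : Lp ℝ 2 P =>
        sInf {r : ℝ | ∃ Y : Ω → ℝ, MemLp Y 2 P ∧ (∀ᵐ ω ∂P, 0 ≤ Y ω) ∧
            (∫ ω, Y ω ∂P = 1) ∧
            r = ∫ ω, ((x₀ + f ω) * Y ω + (Y ω) ^ 2 / (2 * θ) - 1 / (2 * θ)) ∂P})
        '' (K : Set (Lp ℝ 2 P)))
      ≤ x₀ + (∫ ω, (Mt ω) ^ 2 ∂P) / (2 * θ) - 1 / (2 * θ) := by
  rw [hMs] at hMtMem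
  obtain ⟨hMt1, hMtorth⟩ := hMtMem
  have h2θ : (0:ℝ) < 2 * θ := by linarith
  have hMtL2 : MemLp (fun ω => Mt ω) 2 P := Lp.memLp Mt
  apply csSup_le
  · exact ⟨_, Set.mem_image_of_mem _ K.zero_mem⟩
  · rintro r ⟨f, hfK, rfl⟩
    set X : Ω → ℝ := fun ω => x₀ + f ω with hXdef
    have hXL2 : MemLp X 2 P := (memLp_const x₀).add (Lp.memLp f)
    -- the candidate value using Y = Mt
    have hIXMt : Integrable (fun ω => X ω * Mt ω) P := aux_int_mul hXL2 hMtL2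
    have hIMt2 : Integrable (fun ω => (Mt ω)^2) P := hMtL2.integrable_sq
    have hIfMt : Integrable (fun ω => Mt ω * f ω) P := aux_int_mul hMtL2 (Lp.memLp f)
    have hIMt : Integrable (fun ω => Mt ω) P := hMtL2.integrable one_le_two
    have hval : (∫ ω, (X ω * Mt ω + (Mt ω)^2 / (2*θ) - 1/(2*θ)) ∂P)
        = x₀ + (∫ ω, (Mt ω)^2 ∂P) / (2*θ) - 1/(2*θ) := by
      have hsplit : (fun ω => X ω * Mt ω + (Mt ω)^2 / (2*θ) - 1/(2*θ))
          = fun ω => (x₀ * Mt ω + Mt ω * f ω) + ((Mt ω)^2 / (2*θ) - 1/(2*θ)) := by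
        funext ω; simp only [hXdef]; ring
      have h1 : Integrable (fun ω => x₀ * Mt ω + Mt ω * f ω) P :=
        (hIMt.const_mul x₀).add hIfMt
      have h2 : Integrable (fun ω => (Mt ω)^2 / (2*θ) - 1/(2*θ)) P :=
        (hIMt2.div_const _).sub (integrable_const _)
      have h3 : Integrable (fun ω => x₀ * Mt ω) P := hIMt.const_mul x₀
      have h4 : Integrable (fun ω => (Mt ω)^2 / (2*θ)) P := hIMt2.div_const _
      rw [hsplit, integral_add h1 h2, integral_add h3 hIfMt,
        integral_sub h4 (integrable_const _),
        integral_const_mul, hMt1, hMtorth f hfK, integral_div, integral_const]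
      simp [measure_univ]
      ring
    -- membership of the candidate value
    have hmem : x₀ + (∫ ω, (Mt ω)^2 ∂P) / (2*θ) - 1/(2*θ) ∈
        {r : ℝ | ∃ Y : Ω → ℝ, MemLp Y 2 P ∧ (∀ᵐ ω ∂P, 0 ≤ Y ω) ∧
            (∫ ω, Y ω ∂P = 1) ∧
            r = ∫ ω, ((x₀ + f ω) * Y ω + (Y ω) ^ 2 / (2 * θ) - 1 / (2 * θ)) ∂P} :=
      ⟨fun ω => Mt ω, hMtL2, hMtnn, hMt1, hval.symm⟩
    -- bounded below
    have hbdd : BddBelow {r : ℝ | ∃ Y : Ω → ℝ, MemLp Y 2 P ∧ (∀ᵐ ω ∂P, 0 ≤ Y ω) ∧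
            (∫ ω, Y ω ∂P = 1) ∧
            r = ∫ ω, ((x₀ + f ω) * Y ω + (Y ω) ^ 2 / (2 * θ) - 1 / (2 * θ)) ∂P} := by
      refine ⟨∫ ω, (-(θ * (X ω)^2 / 2) - 1/(2*θ)) ∂P, ?_⟩
      rintro r ⟨Y, hY, -, -, rfl⟩
      have hIXY : Integrable (fun ω => X ω * Y ω) P := aux_int_mul hXL2 hY
      have hIY2 : Integrable (fun ω => (Y ω)^2) P := hY.integrable_sq
      have hIrhs : Integrable (fun ω => X ω * Y ω + (Y ω)^2 / (2*θ) - 1/(2*θ)) P :=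
        (hIXY.add (hIY2.div_const _)).sub (integrable_const _)
      have hIlhs : Integrable (fun ω => -(θ * (X ω)^2 / 2) - 1/(2*θ)) P :=
        (((hXL2.integrable_sq.const_mul θ).div_const 2).neg).sub (integrable_const _)
      refine integral_mono hIlhs hIrhs fun ω => ?_
      have key : θ * (X ω)^2 / 2 + X ω * Y ω + (Y ω)^2 / (2*θ)
          = (θ * X ω + Y ω)^2 / (2*θ) := by
        field_simp; ring
      have h0 : 0 ≤ (θ * X ω + Y ω)^2 / (2*θ) := by positivity
      rw [← key] at h0
      simp only
      linarith
    exact csInf_le hbdd hmem
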